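/- arXiv:2311.10087 — 3 statements merged into one kernel-verified Lean document; each statement's English description precedes it below -/
import Mathlib

section
/- Let $m, n$ be positive integers and let $X$ be a binomial random variable with parameters $n$ and $1/2$. Then $\mathbb{P}(X \equiv 0 \pmod m) \leq \frac{1}{m} + \frac{2}{\sqrt{n}}$. -/
open Finset

lemma sixteen_pow (k : ℕ) : (16:ℕ)^k = 4^k * 4^k := by
  calc (16:ℕ)^k = (4*4)^k := by norm_num
    _ = 4^k * 4^k := mul_pow 4 4 k

lemma cb_sq_bound : ∀ k : ℕ, 1 ≤ k → (3*k+1) * (Nat.centralBinom k)^2 ≤ 16^k := by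
  intro k hk
  induction k with
  | zero => omega
  | succ k ih =>
    rcases Nat.eq_or_lt_of_le hk with h1 | h1
    · simp [← h1]; decide
    · have hk1 : 1 ≤ k := by omega
      have ih' := ih hk1
      have key : (k+1) * Nat.centralBinom (k+1) = 2 * (2*k+1) * Nat.centralBinom k :=
        Nat.succ_mul_centralBinom_succ k
      have hpos : 0 < (k+1)^2 * (3*k+1) := by positivity
      apply Nat.le_of_mul_le_mul_left _ hpos
      calc (k+1)^2 * (3*k+1) * ((3*(k+1)+1) * Nat.centralBinom (k+1)^2)
          = (3*(k+1)+1) * (3*k+1) * ((k+1) * Nat.centralBinom (k+1))^2 := by ring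
        _ = (3*(k+1)+1) * (3*k+1) * (2 * (2*k+1) * Nat.centralBinom k)^2 := by rw [key]
        _ = (3*(k+1)+1) * (2*(2*k+1))^2 * ((3*k+1) * Nat.centralBinom k^2) := by ring
        _ ≤ (3*(k+1)+1) * (2*(2*k+1))^2 * 16^k := Nat.mul_le_mul_left _ ih'
        _ ≤ (k+1)^2 * (3*k+1) * 16^(k+1) := by
            rw [pow_succ]
            have h2 : (3*(k+1)+1) * (2*(2*k+1))^2 ≤ (k+1)^2 * (3*k+1) * 16 := by nlinarith
            calc (3*(k+1)+1) * (2*(2*k+1))^2 * 16^k ≤ (k+1)^2 * (3*k+1) * 16 * 16^k :=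
                  Nat.mul_le_mul_right _ h2
              _ = (k+1)^2 * (3*k+1) * (16^k * 16) := by ring

lemma choose_sq_bound (n : ℕ) (hn : 0 < n) : n * (n.choose (n/2))^2 ≤ 4^n := by
  rcases Nat.even_or_odd n with ⟨k, hk⟩ | ⟨k, hk⟩
  · subst hk
    have hk1 : 1 ≤ k := by omega
    have h := cb_sq_bound k hk1
    have hd : (k+k)/2 = k := by omega
    rw [hd]
    have hcb : (k+k).choose k = Nat.centralBinom k := by
      rw [Nat.centralBinom_eq_two_mul_choose]; ring_nf
    rw [hcb]
    calc (k+k) * Nat.centralBinom k^2 ≤ (3*k+1) * Nat.centralBinom k^2 :=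
          Nat.mul_le_mul_right _ (by omega)
      _ ≤ 16^k := h
      _ = 4^(k+k) := by rw [sixteen_pow, ← pow_add]
  · subst hk
    have h := cb_sq_bound (k+1) (by omega)
    have hdiv : (2*k+1)/2 = k := by omega
    rw [hdiv]
    have hrel : Nat.centralBinom (k+1) = 2 * (2*k+1).choose k := by
      rw [Nat.centralBinom_eq_two_mul_choose]
      have h2 : 2*(k+1) = (2*k+1) + 1 := by ring
      rw [h2, Nat.choose_succ_succ' (2*k+1) k]
      have hsymm : (2*k+1).choose (k+1) = (2*k+1).choose k := by
        have hh := Nat.choose_symm (show k+1 ≤ 2*k+1 by omega)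
        have e : 2*k+1-(k+1) = k := by omega
        rw [e] at hh
        exact hh.symm
      rw [hsymm]; ring
    rw [hrel] at h
    have hpos : 0 < 4*(3*(k+1)+1) := by positivity
    apply Nat.le_of_mul_le_mul_left _ hpos
    calc 4*(3*(k+1)+1) * ((2*k+1) * (2*k+1).choose k ^2)
        = (2*k+1) * ((3*(k+1)+1) * (2 * (2*k+1).choose k)^2) := by ring
      _ ≤ (2*k+1) * 16^(k+1) := Nat.mul_le_mul_left _ h
      _ ≤ 4*(3*(k+1)+1) * 4^(2*k+1) := by
          rw [pow_succ, sixteen_pow, show 2*k+1 = (k+k)+1 by ring, pow_succ, ← pow_add]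
          have h3 : (2*k+1)*16 ≤ 4*(3*(k+1)+1)*4 := by nlinarith
          calc (k+k+1) * (4^(k+k) * 16) = (2*k+1)*16 * 4^(k+k) := by ring
            _ ≤ 4*(3*(k+1)+1)*4 * 4^(k+k) := Nat.mul_le_mul_right _ h3
            _ = 4*(3*(k+1)+1) * (4^(k+k) * 4) := by ring

lemma choose_le_pow_div_sqrt (n k : ℕ) (hn : 0 < n) :
    (n.choose k : ℝ) ≤ 2^n / Real.sqrt n := by
  have hs : (0:ℝ) < Real.sqrt n := Real.sqrt_pos.mpr (by exact_mod_cast hn)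
  rw [le_div_iff₀ hs]
  have h1 : (n.choose k : ℝ) ≤ (n.choose (n/2) : ℝ) := by
    exact_mod_cast Nat.choose_le_middle k n
  have h2 : (n.choose (n/2) : ℝ) * Real.sqrt n ≤ 2^n := by
    have hsq : ((n.choose (n/2) : ℝ))^2 * n ≤ (2:ℝ)^(n) * 2^n := by
      have := choose_sq_bound n hn
      have hc : ((n * (n.choose (n/2))^2 : ℕ) : ℝ) ≤ ((4^n : ℕ) : ℝ) := by exact_mod_cast this
      push_cast at hc
      calc ((n.choose (n/2) : ℝ))^2 * n = (n:ℝ) * (n.choose (n/2) : ℝ)^2 := by ring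
        _ ≤ (4:ℝ)^n := hc
        _ = (2:ℝ)^n * 2^n := by rw [show (4:ℝ) = 2*2 by norm_num, mul_pow]
    have e1 : Real.sqrt n * Real.sqrt n = (n:ℝ) := Real.mul_self_sqrt (by positivity)
    have e2 : (0:ℝ) ≤ (n.choose (n/2) : ℝ) := by positivity
    have e3 : (0:ℝ) < (2:ℝ)^n := by positivity
    nlinarith [hs, e1, e2, e3, hsq]
  calc (n.choose k : ℝ) * Real.sqrt n ≤ (n.choose (n/2) : ℝ) * Real.sqrt n :=
      mul_le_mul_of_nonneg_right h1 hs.le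
    _ ≤ 2^n := h2

lemma choose_mono_half (n : ℕ) : ∀ i j : ℕ, i ≤ j → j ≤ n/2 → n.choose i ≤ n.choose j := by
  intro i j hij hj
  induction j with
  | zero => rw [Nat.le_zero.mp hij]
  | succ j ih =>
    rcases Nat.eq_or_lt_of_le hij with h | h
    · rw [h]
    · exact le_trans (ih (by omega) (by omega))
        (Nat.choose_le_succ_of_lt_half_left (by omega))

lemma choose_anti_half (n : ℕ) : ∀ i j : ℕ, n/2 ≤ i → i ≤ j → j ≤ n → n.choose j ≤ n.choose i := by
  intro i j hi hij hj
  rcases Nat.eq_or_lt_of_le hi with h | h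
  · rw [← h]; exact Nat.choose_le_middle j n
  · have h1 : n.choose j = n.choose (n - j) := (Nat.choose_symm hj).symm
    have h2 : n.choose i = n.choose (n - i) := (Nat.choose_symm (by omega)).symm
    rw [h1, h2]
    exact choose_mono_half n (n-j) (n-i) (by omega) (by omega)

lemma block_bound {a : ℕ → ℝ} {l m : ℕ} {c : ℝ}
    (h : ∀ i ∈ Finset.Ico l (l+m), c ≤ a i) :
    (m:ℝ) * c ≤ ∑ i ∈ Finset.Ico l (l+m), a i := by
  have h2 : ∑ _i ∈ Finset.Ico l (l+m), c ≤ ∑ i ∈ Finset.Ico l (l+m), a i :=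
    Finset.sum_le_sum h
  simpa [Finset.sum_const, Nat.card_Ico, nsmul_eq_mul] using h2

lemma left_sum (n m : ℕ) (hm : 0 < m) :
    ∀ J : ℕ, J*m ≤ n/2 →
      ∑ j ∈ range J, (m:ℝ) * (n.choose (j*m)) ≤ ∑ i ∈ Finset.Ico 0 (J*m), (n.choose i : ℝ) := by
  intro J
  induction J with
  | zero => simp
  | succ J ih =>
    intro hJ
    rw [Finset.sum_range_succ,
      ← Finset.sum_Ico_consecutive (fun i => (n.choose i : ℝ))
        (Nat.zero_le (J*m)) (by nlinarith : J*m ≤ (J+1)*m)]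
    have hblk : (m:ℝ) * (n.choose (J*m)) ≤ ∑ i ∈ Finset.Ico (J*m) ((J+1)*m), (n.choose i : ℝ) := by
      have he : (J+1)*m = J*m + m := by ring
      rw [he]
      apply block_bound
      intro i hi
      rw [Finset.mem_Ico] at hi
      exact_mod_cast choose_mono_half n (J*m) i hi.1 (by omega)
    have ih' := ih (le_trans (by nlinarith) hJ)
    linarith

lemma right_sum (n m : ℕ) (hm : 0 < m) (s : ℕ) (hs : n/2 < (s+1)*m) :
    ∀ t : ℕ, t*m ≤ n →
      ∑ j ∈ Finset.Ico (s+2) (t+1), (m:ℝ) * (n.choose (j*m))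
        ≤ ∑ i ∈ Finset.Ico ((s+1)*m+1) (t*m+1), (n.choose i : ℝ) := by
  intro t
  induction t with
  | zero =>
    intro _
    rw [Finset.Ico_eq_empty (by omega), Finset.Ico_eq_empty (by nlinarith)]
    simp
  | succ t ih =>
    intro ht
    by_cases hts : s + 1 ≤ t
    · rw [Finset.sum_Ico_succ_top (by omega : s+2 ≤ t+1),
        ← Finset.sum_Ico_consecutive (fun i => (n.choose i : ℝ))
          (by nlinarith : (s+1)*m+1 ≤ t*m+1) (by nlinarith : t*m+1 ≤ (t+1)*m+1)]
      have hblk : (m:ℝ) * (n.choose ((t+1)*m)) ≤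
          ∑ i ∈ Finset.Ico (t*m+1) ((t+1)*m+1), (n.choose i : ℝ) := by
        have he : (t+1)*m+1 = (t*m+1) + m := by ring
        rw [he]
        apply block_bound
        intro i hi
        rw [Finset.mem_Ico] at hi
        have h1 : n/2 ≤ i := by nlinarith [hi.1]
        have h2 : i ≤ (t+1)*m := by omega
        exact_mod_cast choose_anti_half n i ((t+1)*m) h1 h2 ht
      have ih' := ih (by nlinarith)
      linarith
    · rw [Finset.Ico_eq_empty (by omega : ¬ s+2 < t+1+1)]
      simp only [Finset.sum_empty]
      apply Finset.sum_nonneg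
      intro i _
      positivity

theorem binomial_divisibility_bound (m n : ℕ) (hm : 0 < m) (hn : 0 < n) :
    (∑ k ∈ Finset.range (n + 1), if m ∣ k then (n.choose k : ℝ) else 0) / 2 ^ n
      ≤ 1 / m + 2 / Real.sqrt n := by
  set t := n / m with ht_def
  set s := n / 2 / m with hs_def
  have htm : t * m ≤ n := Nat.div_mul_le_self n m
  have hsm : s * m ≤ n / 2 := Nat.div_mul_le_self _ _
  have hs1 : n / 2 < (s+1) * m := by
    have h1 := Nat.div_add_mod (n/2) m
    have h2 := Nat.mod_lt (n/2) hm
    have h3 : (s+1) * m = m * (n/2/m) + m := by rw [hs_def]; ring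
    omega
  have hst : s ≤ t := Nat.div_le_div_right (Nat.div_le_self n 2)
  set M : ℝ := (n.choose (n/2) : ℝ) with hM_def
  have hMle : ∀ j : ℕ, (n.choose j : ℝ) ≤ M := by
    intro j; rw [hM_def]; exact_mod_cast Nat.choose_le_middle j n
  have hMnn : 0 ≤ M := by positivity
  -- rewrite LHS sum as sum over multiples
  have hfe : (Finset.range (n+1)).filter (fun k => m ∣ k)
      = (Finset.range (t+1)).image (fun j => j*m) := by
    ext k
    simp only [Finset.mem_filter, Finset.mem_range, Finset.mem_image, Nat.lt_succ_iff]
    constructor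
    · rintro ⟨hk, j, rfl⟩
      refine ⟨j, ?_, mul_comm j m⟩
      rw [ht_def, Nat.le_div_iff_mul_le hm, mul_comm]
      exact hk
    · rintro ⟨j, hj, rfl⟩
      rw [ht_def, Nat.le_div_iff_mul_le hm] at hj
      exact ⟨hj, dvd_mul_left m j⟩
  have hLHS : (∑ k ∈ Finset.range (n + 1), if m ∣ k then (n.choose k : ℝ) else 0)
      = ∑ j ∈ Finset.range (t+1), (n.choose (j*m) : ℝ) := by
    rw [← Finset.sum_filter, hfe]
    exact Finset.sum_image (fun x _ y _ h => Nat.eq_of_mul_eq_mul_right hm h)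
  set S : ℝ := ∑ j ∈ Finset.range (t+1), (n.choose (j*m) : ℝ) with hS_def
  -- multiply by m and bound
  have hleft := left_sum n m hm s hsm
  have hright := right_sum n m hm s hs1 t htm
  have hsplit1 : ∑ j ∈ Finset.range (t+1), (m:ℝ) * (n.choose (j*m))
      = (∑ j ∈ Finset.range s, (m:ℝ) * (n.choose (j*m)))
        + ∑ j ∈ Finset.Ico s (t+1), (m:ℝ) * (n.choose (j*m)) := by
    rw [Finset.range_eq_Ico,
      ← Finset.sum_Ico_consecutive (fun j => (m:ℝ) * (n.choose (j*m)))
        (Nat.zero_le s) (by omega : s ≤ t+1), ← Finset.range_eq_Ico]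
  have hmid : ∑ j ∈ Finset.Ico s (t+1), (m:ℝ) * (n.choose (j*m))
      ≤ 2*((m:ℝ)*M) + ∑ j ∈ Finset.Ico (s+2) (t+1), (m:ℝ) * (n.choose (j*m)) := by
    by_cases h : s + 1 ≤ t
    · rw [← Finset.sum_Ico_consecutive _ (by omega : s ≤ s+2) (by omega : s+2 ≤ t+1)]
      have h2 : ∑ j ∈ Finset.Ico s (s+2), (m:ℝ) * (n.choose (j*m)) ≤ 2*((m:ℝ)*M) := by
        rw [show s+2 = (s+1)+1 from rfl,
          Finset.sum_Ico_succ_top (by omega : s ≤ s+1),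
          Finset.sum_Ico_succ_top (le_refl s), Finset.Ico_self, Finset.sum_empty]
        have a1 := hMle (s*m)
        have a2 := hMle ((s+1)*m)
        have hm0 : (0:ℝ) ≤ m := by positivity
        nlinarith
      linarith
    · have hts : t = s := by omega
      rw [hts, Finset.Ico_eq_empty (by omega : ¬ s+2 < s+1), Finset.sum_empty,
        Finset.sum_Ico_succ_top (le_refl s), Finset.Ico_self, Finset.sum_empty]
      have a1 := hMle (s*m)
      have hm0 : (0:ℝ) ≤ m := by positivity
      nlinarith
  -- union of blocks bounded by total
  have hdisj : Disjoint (Finset.Ico 0 (s*m)) (Finset.Ico ((s+1)*m+1) (t*m+1)) := by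
    rw [Finset.disjoint_left]
    intro x hx hx'
    rw [Finset.mem_Ico] at hx hx'
    have : s*m ≤ (s+1)*m := by nlinarith
    omega
  have hunion : (∑ i ∈ Finset.Ico 0 (s*m), (n.choose i : ℝ))
      + ∑ i ∈ Finset.Ico ((s+1)*m+1) (t*m+1), (n.choose i : ℝ)
      ≤ ∑ i ∈ Finset.range (n+1), (n.choose i : ℝ) := by
    rw [← Finset.sum_union hdisj]
    apply Finset.sum_le_sum_of_subset_of_nonneg
    · intro x hx
      rw [Finset.mem_union, Finset.mem_Ico, Finset.mem_Ico] at hx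
      rw [Finset.mem_range]
      omega
    · intro i _ _
      positivity
  have htotal : ∑ i ∈ Finset.range (n+1), (n.choose i : ℝ) = 2^n := by
    have h := Nat.sum_range_choose n
    calc ∑ i ∈ Finset.range (n+1), (n.choose i : ℝ)
        = ((∑ i ∈ Finset.range (n+1), n.choose i : ℕ) : ℝ) := by push_cast; rfl
      _ = ((2^n : ℕ) : ℝ) := by rw [h]
      _ = 2^n := by push_cast; rfl
  have hmS : (m:ℝ) * S ≤ 2^n + 2*((m:ℝ)*M) := by
    rw [hS_def, Finset.mul_sum]
    rw [Finset.range_eq_Ico] at hleft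
    calc ∑ j ∈ Finset.range (t+1), (m:ℝ) * (n.choose (j*m))
        = (∑ j ∈ Finset.range s, (m:ℝ) * (n.choose (j*m)))
          + ∑ j ∈ Finset.Ico s (t+1), (m:ℝ) * (n.choose (j*m)) := hsplit1
      _ ≤ (∑ i ∈ Finset.Ico 0 (s*m), (n.choose i : ℝ))
          + (2*((m:ℝ)*M) + ∑ i ∈ Finset.Ico ((s+1)*m+1) (t*m+1), (n.choose i : ℝ)) := by
          rw [Finset.range_eq_Ico]
          exact add_le_add hleft (le_trans hmid (by linarith [hright]))
      _ ≤ 2^n + 2*((m:ℝ)*M) := by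
          rw [← htotal]; linarith [hunion]
  -- finish
  rw [hLHS]
  have h2n : (0:ℝ) < 2^n := by positivity
  have hmR : (0:ℝ) < (m:ℝ) := by exact_mod_cast hm
  rw [div_le_iff₀ h2n]
  have hkey : (1/(m:ℝ) + 2/Real.sqrt n) * 2^n = 2^n/m + 2*(2^n/Real.sqrt n) := by ring
  rw [hkey]
  have hMb : M ≤ 2^n / Real.sqrt n := choose_le_pow_div_sqrt n (n/2) hn
  have hS2 : S ≤ 2^n/m + 2*M := by
    have h1 : S ≤ (2^n + 2*((m:ℝ)*M))/m := by
      rw [le_div_iff₀ hmR]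
      nlinarith [hmS]
    have h2 : ((2:ℝ)^n + 2*((m:ℝ)*M))/m = 2^n/m + 2*M := by
      field_simp
    linarith
  linarith
end

section
/- Let $n$ be a positive integer and let $1 \leq a_1 < a_2 < \cdots < a_k \leq n$ be integers. Then $|S(a)| \leq (c_4 + o(1)) n^2$ as $n \to \infty$, where $c_4 = \frac{e^2 - 1}{2(e^2 + 1)}$. Precisely: for every $\epsilon > 0$ there exists $N$ such that for all $n \geq N$ and all such sequences, $|S(a)| \leq (c_4 + \epsilon) n^2$. -/
open Real

lemma log_le_half (x : ℝ) (hx : 1 ≤ x) : Real.log x ≤ (x - x⁻¹)/2 := by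
  have hx0 : 0 < x := lt_of_lt_of_le one_pos hx
  have h1 : Real.log x ≤ Real.sinh (Real.log x) := by
    rcases eq_or_lt_of_le (Real.log_nonneg hx) with h | h
    · rw [← h]; simp
    · exact le_of_lt ((Real.self_lt_sinh_iff).mpr h)
  calc Real.log x ≤ Real.sinh (Real.log x) := h1
    _ = (x - x⁻¹)/2 := by
        rw [Real.sinh_eq, Real.exp_log hx0, Real.exp_neg, Real.exp_log hx0]

noncomputable def Gfun (K t : ℝ) : ℝ :=
  if t^2 ≤ K then 0
  else (t * Real.sqrt (t^2 - K) - K * Real.log ((t + Real.sqrt (t^2 - K))/Real.sqrt K))/2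

lemma Gfun_nonneg {K : ℝ} (hK : 0 < K) {t : ℝ} (ht : 0 ≤ t) : 0 ≤ Gfun K t := by
  unfold Gfun
  split_ifs with h
  · exact le_refl 0
  · push_neg at h
    set s := Real.sqrt (t^2 - K) with hs_def
    have hs2 : s^2 = t^2 - K := Real.sq_sqrt (by linarith)
    have hs0 : 0 < s := Real.sqrt_pos.mpr (by linarith)
    have hrK0 : 0 < Real.sqrt K := Real.sqrt_pos.mpr hK
    have hrK2 : (Real.sqrt K)^2 = K := Real.sq_sqrt hK.le
    have htK : Real.sqrt K < t := by
      nlinarith [hrK0, ht]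
    set y := (t + s)/Real.sqrt K with hy_def
    have hy1 : 1 ≤ y := by
      rw [hy_def, le_div_iff₀ hrK0]; nlinarith
    have hlog := log_le_half y hy1
    have hy0 : 0 < y := lt_of_lt_of_le one_pos hy1
    have hyinv : y⁻¹ = Real.sqrt K / (t + s) := by
      rw [hy_def]; field_simp
    have hts : 0 < t + s := by linarith
    have hy2 : y - y⁻¹ = 2*s/Real.sqrt K := by
      rw [hy_def, hyinv]
      field_simp
      ring_nf
      linear_combination -hs2 - hrK2
    have key : K * ((y - y⁻¹)/2) = Real.sqrt K * s := by
      rw [hy2]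
      field_simp
      ring_nf
      linear_combination -hrK2
    have : K * Real.log y ≤ Real.sqrt K * s := by
      calc K * Real.log y ≤ K * ((y - y⁻¹)/2) := by
            apply mul_le_mul_of_nonneg_left hlog hK.le
        _ = Real.sqrt K * s := key
    have h2 : Real.sqrt K * s ≤ t * s := by
      apply mul_le_mul_of_nonneg_right htK.le hs0.le
    linarith
lemma Gfun_hasDerivAt {K : ℝ} (hK : 0 < K) {t : ℝ} (ht : Real.sqrt K < t) :
    HasDerivAt (Gfun K) (Real.sqrt (t^2 - K)) t := by
  have hrK0 : 0 < Real.sqrt K := Real.sqrt_pos.mpr hK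
  have hrK2 : (Real.sqrt K)^2 = K := Real.sq_sqrt hK.le
  have ht0 : 0 < t := lt_trans hrK0 ht
  have ht2 : K < t^2 := by nlinarith
  have hs0 : 0 < Real.sqrt (t^2 - K) := Real.sqrt_pos.mpr (by linarith)
  have hs2 : (Real.sqrt (t^2 - K))^2 = t^2 - K := Real.sq_sqrt (by linarith)
  set s := Real.sqrt (t^2 - K) with hs_def
  -- derivative of inner
  have hinner : HasDerivAt (fun x : ℝ => x^2 - K) (2*t) t := by
    simpa using (hasDerivAt_pow 2 t).sub_const K
  have hsqrt : HasDerivAt (fun x => Real.sqrt (x^2 - K)) (2*t/(2*s)) t :=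
    hinner.sqrt (ne_of_gt (sub_pos.mpr ht2))
  have h1 : HasDerivAt (fun x => x * Real.sqrt (x^2 - K)) (1 * s + t * (2*t/(2*s))) t :=
    (hasDerivAt_id t).mul hsqrt
  have h2 : HasDerivAt (fun x => (x + Real.sqrt (x^2 - K))/Real.sqrt K)
      ((1 + 2*t/(2*s))/Real.sqrt K) t := ((hasDerivAt_id t).add hsqrt).div_const _
  have hpos : 0 < (t + s)/Real.sqrt K := by positivity
  have h3 : HasDerivAt (fun x => Real.log ((x + Real.sqrt (x^2 - K))/Real.sqrt K))
      (((1 + 2*t/(2*s))/Real.sqrt K)/((t + s)/Real.sqrt K)) t := by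
    have := h2.log (ne_of_gt hpos)
    simpa using this
  have h4 : HasDerivAt
      (fun x => (x * Real.sqrt (x^2 - K) - K * Real.log ((x + Real.sqrt (x^2 - K))/Real.sqrt K))/2)
      ((1 * s + t * (2*t/(2*s)) - K * (((1 + 2*t/(2*s))/Real.sqrt K)/((t + s)/Real.sqrt K)))/2) t :=
    (h1.sub (h3.const_mul K)).div_const 2
  have heq : (1 * s + t * (2*t/(2*s)) - K * (((1 + 2*t/(2*s))/Real.sqrt K)/((t + s)/Real.sqrt K)))/2 = s := by
    rw [div_div_div_cancel_right₀]
    · field_simp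
      ring_nf
      linear_combination (-s - t) * hs2
    · exact ne_of_gt hrK0
  rw [heq] at h4
  apply h4.congr_of_eventuallyEq
  have hmem : Set.Ioi (Real.sqrt K) ∈ nhds t := Ioi_mem_nhds ht
  filter_upwards [hmem] with x hx
  have hx0 : 0 < x := lt_trans hrK0 hx
  have : ¬ (x^2 ≤ K) := by push_neg; nlinarith [Set.mem_Ioi.mp hx]
  simp only [Gfun, if_neg this]

lemma Gfun_step {K : ℝ} (hK : 0 < K) {w : ℝ} (hw : 0 ≤ w) :
    Real.sqrt (w^2 - K) ≤ Gfun K (w+1) - Gfun K w := by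
  by_cases hcase : w^2 ≤ K
  · have h0 : Real.sqrt (w^2 - K) = 0 := Real.sqrt_eq_zero'.mpr (by linarith)
    have hGw : Gfun K w = 0 := by simp only [Gfun, if_pos hcase]
    rw [h0, hGw, sub_zero]
    exact Gfun_nonneg hK (by linarith : (0:ℝ) ≤ w+1)
  · push_neg at hcase
    have hrK2 : (Real.sqrt K)^2 = K := Real.sq_sqrt hK.le
    have hwK : Real.sqrt K < w := by nlinarith [Real.sqrt_nonneg K]
    set c := Real.sqrt (w^2 - K) with hc
    have hdiff : ∀ x ∈ Set.Icc w (w+1),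
        HasDerivAt (fun y => Gfun K y - c * y) (Real.sqrt (x^2 - K) - c * 1) x := by
      intro x hx
      exact (Gfun_hasDerivAt hK (lt_of_lt_of_le hwK hx.1)).sub ((hasDerivAt_id x).const_mul c)
    have mono : MonotoneOn (fun y => Gfun K y - c * y) (Set.Icc w (w+1)) := by
      apply monotoneOn_of_deriv_nonneg (convex_Icc _ _)
      · exact fun x hx => (hdiff x hx).continuousAt.continuousWithinAt
      · intro x hx
        rw [interior_Icc] at hx
        exact ((hdiff x (Set.mem_Icc_of_Ioo hx)).differentiableAt).differentiableWithinAt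
      · intro x hx
        rw [interior_Icc] at hx
        rw [(hdiff x (Set.mem_Icc_of_Ioo hx)).deriv]
        have : c ≤ Real.sqrt (x^2 - K) := by
          apply Real.sqrt_le_sqrt
          have : w ≤ x := (Set.mem_Icc_of_Ioo hx).1
          nlinarith
        linarith
    have h := mono (Set.left_mem_Icc.mpr (by linarith)) (Set.right_mem_Icc.mpr (by linarith))
        (by linarith : w ≤ w+1)
    simp only at h
    nlinarith [h]

lemma sum_sqrt_le {K : ℝ} (hK : 0 < K) (n : ℕ) :
    ∑ v ∈ Finset.Icc 1 n, Real.sqrt (((v:ℝ)+1)^2 - K) ≤ Gfun K ((n:ℝ)+2) := by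
  have himg : Finset.Icc 1 n = Finset.image (· + 1) (Finset.range n) := by
    ext x
    simp only [Finset.mem_Icc, Finset.mem_image, Finset.mem_range]
    constructor
    · rintro ⟨h1, h2⟩; exact ⟨x-1, by omega, by omega⟩
    · rintro ⟨i, hi, rfl⟩; omega
  rw [himg, Finset.sum_image (by intro x _ y _ h; simp only at h; omega)]
  set f : ℕ → ℝ := fun i => Gfun K ((i:ℝ)+2) with hf
  have hstep : ∀ i ∈ Finset.range n,
      Real.sqrt ((((i+1:ℕ):ℝ)+1)^2 - K) ≤ f (i+1) - f i := by
    intro i _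
    have h := Gfun_step hK (by positivity : (0:ℝ) ≤ (i:ℝ)+2)
    have e1 : (((i+1:ℕ):ℝ)+1)^2 = ((i:ℝ)+2)^2 := by push_cast; ring
    have e2 : f (i+1) = Gfun K ((i:ℝ)+2+1) := by
      rw [hf]; push_cast; ring_nf
    rw [e1, e2]
    exact h
  calc ∑ i ∈ Finset.range n, Real.sqrt ((((i+1:ℕ):ℝ)+1)^2 - K)
      ≤ ∑ i ∈ Finset.range n, (f (i+1) - f i) := Finset.sum_le_sum hstep
    _ = f n - f 0 := Finset.sum_range_sub f n
    _ ≤ f n := by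
        have : 0 ≤ f 0 := Gfun_nonneg hK (by norm_num)
        linarith
    _ = Gfun K ((n:ℝ)+2) := rfl

lemma Gfun_value {c τ N : ℝ} (hc0 : 0 < c) (hc1 : c < 1) (hN : 0 < N) (hτ : 0 ≤ τ)
    (h1 : c^2 + τ^2 = 1) (hE : Real.log ((1+τ)/c) = 1) :
    Gfun (c^2*N^2) N = (τ*N^2 - c^2*N^2)/2 := by
  have hN2 : 0 < N^2 := by positivity
  have hc2 : c^2 < 1 := by nlinarith
  have hif : ¬ (N^2 ≤ c^2*N^2) := by nlinarith
  unfold Gfun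
  rw [if_neg hif]
  have h2 : N^2 - c^2*N^2 = (τ*N)^2 := by linear_combination (-N^2) * h1
  have hsq : Real.sqrt (N^2 - c^2*N^2) = τ*N := by
    rw [h2, Real.sqrt_sq (by positivity)]
  have hsqK : Real.sqrt (c^2*N^2) = c*N := by
    rw [show c^2*N^2 = (c*N)^2 by ring, Real.sqrt_sq (by positivity)]
  rw [hsq, hsqK]
  have harg : (N + τ*N)/(c*N) = (1+τ)/c := by
    rw [div_eq_div_iff (by positivity) (ne_of_gt hc0)]
    ring
  rw [harg, hE]
  ring

lemma strict_shift {k : ℕ} {a : ℕ → ℕ} (h : StrictMonoOn a (Finset.Icc 1 k)) :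
    ∀ d t, 1 ≤ t → t + d ≤ k → a t + d ≤ a (t + d) := by
  intro d
  induction d with
  | zero => intro t _ _; simp
  | succ d ih =>
    intro t ht htk
    have h1 : a t + d ≤ a (t+d) := ih t ht (by omega)
    have h2 : a (t+d) < a (t+d+1) := by
      apply h
      · simp only [Finset.coe_Icc, Set.mem_Icc]; omega
      · simp only [Finset.coe_Icc, Set.mem_Icc]; omega
      · omega
    have h3 : a (t+(d+1)) = a (t+d+1) := rfl
    omega

lemma gauss_bound : ∀ (u v : ℕ), 1 ≤ u → u ≤ v →
    2*(∑ i ∈ Finset.Icc u v, i) + (u-1)*(u-1) ≤ (v+1)*(v+1) := by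
  intro u v h1 huv
  induction v, huv using Nat.le_induction with
  | base =>
    rw [Finset.Icc_self, Finset.sum_singleton]
    obtain ⟨p, rfl⟩ : ∃ p, u = p+1 := ⟨u-1, by omega⟩
    simp only [Nat.add_sub_cancel]
    nlinarith
  | succ v hv ih =>
    rw [Finset.sum_Icc_succ_top (by omega)]
    nlinarith [ih]

set_option maxHeartbeats 2000000

theorem consecutive_sums_upper_bound :
    ∀ ε : ℝ, 0 < ε → ∃ N : ℕ, ∀ n : ℕ, N ≤ n →
    ∀ (k : ℕ) (a : ℕ → ℕ), StrictMonoOn a (Finset.Icc 1 k) →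
      (∀ i ∈ Finset.Icc 1 k, 1 ≤ a i ∧ a i ≤ n) →
      (((((Finset.Icc 1 k) ×ˢ (Finset.Icc 1 k)).filter fun q => q.1 ≤ q.2).image
          fun q => ∑ i ∈ Finset.Icc q.1 q.2, a i).card : ℝ)
        ≤ ((Real.exp 1 ^ 2 - 1) / (2 * (Real.exp 1 ^ 2 + 1)) + ε) * n ^ 2 := by
  intro ε hε
  refine ⟨max 1 ⌈6/ε⌉₊, ?_⟩
  intro n hn k a hmono hbound
  set E := Real.exp 1 with hEdef
  have hE2 : 2 ≤ E := by have := Real.add_one_le_exp 1; simp at this ⊢; linarith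
  have hden : (0:ℝ) < E^2+1 := by nlinarith
  set τ : ℝ := (E^2-1)/(E^2+1) with hτdef
  have hτ0 : 0 ≤ τ := div_nonneg (by nlinarith) hden.le
  have hτ1 : τ ≤ 1 := by rw [div_le_one hden]; nlinarith
  set c : ℝ := 2*E/(E^2+1) with hcdef
  have hc0 : 0 < c := by positivity
  have hc1 : c < 1 := by rw [div_lt_one hden]; nlinarith
  have hcτ : c^2 + τ^2 = 1 := by
    rw [hcdef, hτdef]
    field_simp
    ring
  have hlogE : Real.log ((1+τ)/c) = 1 := by
    have harg : (1+τ)/c = E := by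
      rw [hτdef, hcdef]
      rw [div_eq_iff (by positivity)]
      field_simp
      ring
    rw [harg]
    exact Real.log_exp 1
  have hn1 : 1 ≤ n := le_trans (le_max_left _ _) hn
  have hn1R : (1:ℝ) ≤ (n:ℝ) := by exact_mod_cast hn1
  have hnεR : 6/ε ≤ (n:ℝ) := by
    have h1 : (⌈6/ε⌉₊ : ℕ) ≤ n := le_trans (le_max_right _ _) hn
    calc 6/ε ≤ (⌈6/ε⌉₊ : ℝ) := Nat.le_ceil _
      _ ≤ (n:ℝ) := by exact_mod_cast h1
  set N : ℝ := (n:ℝ)+2 with hNdef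
  have hN0 : 0 < N := by positivity
  set K : ℝ := c^2*N^2 with hKdef
  have hK0 : 0 < K := by positivity
  set m : ℕ := ⌈K/2⌉₊ with hmdef
  have hm1 : K ≤ 2*(m:ℝ) := by
    have := Nat.le_ceil (K/2)
    rw [← hmdef] at this
    linarith
  have hm2 : (m:ℝ) ≤ K/2 + 1 := by
    have := Nat.ceil_lt_add_one (show (0:ℝ) ≤ K/2 by positivity)
    rw [← hmdef] at this
    linarith
  have hconst : (E^2-1)/(2*(E^2+1)) = τ/2 := by
    rw [hτdef, div_div]
    ring_nf
  -- final numeric bound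
  have hfinal : (m:ℝ) + ((n:ℝ) + Gfun K N) ≤ ((E^2-1)/(2*(E^2+1)) + ε)*(n:ℝ)^2 := by
    have hGval : Gfun K N = (τ*N^2 - c^2*N^2)/2 := by
      rw [hKdef]
      exact Gfun_value hc0 hc1 hN0 hτ0 hcτ hlogE
    rw [hGval, hconst]
    have hm2' : (m:ℝ) ≤ c^2*N^2/2 + 1 := by rw [hKdef] at hm2; linarith
    have h6 : 6*(n:ℝ) ≤ ε*(n:ℝ)^2 := by
      have h7 : 6 ≤ ε*(n:ℝ) := by
        rw [div_le_iff₀ hε] at hnεR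
        linarith [hnεR, mul_comm ε (n:ℝ)]
      nlinarith
    have hexp : N^2 = (n:ℝ)^2 + 4*(n:ℝ) + 4 := by rw [hNdef]; ring
    have hτN : τ*N^2 = τ*(n:ℝ)^2 + τ*(4*(n:ℝ)+4) := by rw [hexp]; ring
    have hτn : τ*(4*(n:ℝ)+4) ≤ 4*(n:ℝ)+4 := by nlinarith
    have hRHSexp : (τ/2+ε)*(n:ℝ)^2 = τ/2*(n:ℝ)^2 + ε*(n:ℝ)^2 := by ring
    linarith [hm2', h6, hτN, hτn, hRHSexp]
  -- RHS nonneg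
  have hRHS0 : (0:ℝ) ≤ ((E^2-1)/(2*(E^2+1)) + ε)*(n:ℝ)^2 := by
    apply mul_nonneg _ (by positivity)
    have : (0:ℝ) ≤ (E^2-1)/(2*(E^2+1)) := div_nonneg (by nlinarith) (by nlinarith)
    linarith
  rcases Nat.eq_zero_or_pos k with hk0 | hk1
  · subst hk0
    rw [show Finset.Icc 1 0 = (∅ : Finset ℕ) from Finset.Icc_eq_empty (by omega)]
    simp only [Finset.empty_product, Finset.filter_empty, Finset.image_empty,
      Finset.card_empty, Nat.cast_zero]
    exact hRHS0
  · -- main case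
    have hkmem : k ∈ Finset.Icc 1 k := Finset.mem_Icc.mpr ⟨hk1, le_refl k⟩
    have hak : a k ≤ n := (hbound k hkmem).2
    have halow : ∀ t, 1 ≤ t → t ≤ k → t ≤ a t := by
      intro t h1 h2
      have h3 := strict_shift hmono (t-1) 1 (le_refl 1) (by omega)
      have h4 : 1 ≤ a 1 := (hbound 1 (Finset.mem_Icc.mpr ⟨le_refl 1, hk1⟩)).1
      have h5 : 1 + (t-1) = t := by omega
      rw [h5] at h3
      omega
    have hahigh : ∀ t, 1 ≤ t → t ≤ k → a t + (k - t) ≤ n := by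
      intro t h1 h2
      have h3 := strict_shift hmono (k-t) t h1 (by omega)
      have h5 : t + (k-t) = k := by omega
      rw [h5] at h3
      omega
    have hkn : k ≤ n := le_trans (halow k hk1 (le_refl k)) hak
    set SP := (((Finset.Icc 1 k) ×ˢ (Finset.Icc 1 k)).filter fun q => q.1 ≤ q.2) with hSPdef
    set f : ℕ×ℕ → ℕ := fun q => ∑ i ∈ Finset.Icc q.1 q.2, a i with hfdef
    set Pn := (((Finset.Icc 1 n) ×ˢ (Finset.Icc 1 n)).filter
        (fun q => q.1 ≤ q.2 ∧ m < ∑ i ∈ Finset.Icc q.1 q.2, i)) with hPndef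
    -- Step A
    have hA : (SP.image f).card ≤ m + Pn.card := by
      have hsplit : SP.image f ⊆ (Finset.Icc 1 m) ∪ ((SP.filter (fun q => m < f q)).image f) := by
        intro x hx
        rw [Finset.mem_image] at hx
        obtain ⟨q, hq, rfl⟩ := hx
        by_cases hle : f q ≤ m
        · apply Finset.mem_union_left
          rw [Finset.mem_Icc]
          refine ⟨?_, hle⟩
          have hq' := Finset.mem_filter.mp hq
          have hq1 := (Finset.mem_product.mp hq'.1).1
          have h1a := (hbound q.1 hq1).1
          have hmem1 : q.1 ∈ Finset.Icc q.1 q.2 := Finset.mem_Icc.mpr ⟨le_refl _, hq'.2⟩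
          calc 1 ≤ a q.1 := h1a
            _ ≤ f q := Finset.single_le_sum (fun i _ => Nat.zero_le (a i)) hmem1
        · apply Finset.mem_union_right
          exact Finset.mem_image_of_mem f (Finset.mem_filter.mpr ⟨hq, by omega⟩)
      calc (SP.image f).card ≤ ((Finset.Icc 1 m) ∪ ((SP.filter (fun q => m < f q)).image f)).card :=
            Finset.card_le_card hsplit
        _ ≤ (Finset.Icc 1 m).card + ((SP.filter (fun q => m < f q)).image f).card :=
            Finset.card_union_le _ _
        _ ≤ m + ((SP.filter (fun q => m < f q)).image f).card := by
            simp [Nat.card_Icc]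
        _ ≤ m + (SP.filter (fun q => m < f q)).card := by
            exact Nat.add_le_add_left (Finset.card_image_le) m
        _ ≤ m + Pn.card := by
            apply Nat.add_le_add_left
            apply Finset.card_le_card_of_injOn (fun q => (q.1 + (n-k), q.2 + (n-k)))
            · intro q hq
              have hq' := Finset.mem_filter.mp hq
              have hqm : m < f q := hq'.2
              have hq'' := Finset.mem_filter.mp hq'.1
              have hqp := Finset.mem_product.mp hq''.1
              have hq1 := Finset.mem_Icc.mp hqp.1
              have hq2 := Finset.mem_Icc.mp hqp.2
              have hle := hq''.2
              show (q.1 + (n-k), q.2 + (n-k)) ∈ Pn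
              rw [hPndef, Finset.mem_filter, Finset.mem_product]
              refine ⟨⟨Finset.mem_Icc.mpr ⟨by omega, by omega⟩, Finset.mem_Icc.mpr ⟨by omega, by omega⟩⟩,
                by simp only; omega, ?_⟩
              simp only
              have hsum : f q ≤ ∑ i ∈ Finset.Icc (q.1 + (n-k)) (q.2 + (n-k)), i := by
                rw [← Finset.map_add_right_Icc, Finset.sum_map]
                simp only [addRightEmbedding_apply]
                apply Finset.sum_le_sum
                intro i hi
                have hii := Finset.mem_Icc.mp hi
                have := hahigh i (by omega) (by omega)
                omega
              omega
            · intro q1 h1 q2 h2 heq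
              simp only [Prod.mk.injEq] at heq
              exact Prod.ext (by omega) (by omega)
    -- Step B
    have hB : (Pn.card : ℝ) ≤ (n:ℝ) + ∑ v ∈ Finset.Icc 1 n, Real.sqrt (((v:ℝ)+1)^2 - K) := by
      have hfib : Pn.card = ∑ v ∈ Finset.Icc 1 n, (Pn.filter (fun q => q.2 = v)).card := by
        apply Finset.card_eq_sum_card_fiberwise
        intro q hq
        have hq' := Finset.mem_filter.mp hq
        exact (Finset.mem_product.mp hq'.1).2
      have hfiber : ∀ v ∈ Finset.Icc 1 n,
          ((Pn.filter (fun q => q.2 = v)).card : ℝ) ≤ Real.sqrt (((v:ℝ)+1)^2 - K) + 1 := by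
        intro v _
        set x := Real.sqrt (((v:ℝ)+1)^2 - K) with hx
        have hx0 : 0 ≤ x := Real.sqrt_nonneg _
        have hcard : (Pn.filter (fun q => q.2 = v)).card ≤ (Finset.Icc 1 ⌊x+1⌋₊).card := by
          apply Finset.card_le_card_of_injOn (fun q : ℕ × ℕ => q.1)
          · intro q hq
            have hq' := Finset.mem_filter.mp hq
            have hqv : q.2 = v := hq'.2
            have hq'' := Finset.mem_filter.mp hq'.1
            have hqp := Finset.mem_product.mp hq''.1
            have hq1 := Finset.mem_Icc.mp hqp.1
            have hle : q.1 ≤ q.2 := hq''.2.1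
            have hsum : m < ∑ i ∈ Finset.Icc q.1 q.2, i := hq''.2.2
            rw [Finset.mem_coe, Finset.mem_Icc]
            refine ⟨hq1.1, ?_⟩
            apply Nat.le_floor
            -- real bound
            have hg := gauss_bound q.1 q.2 hq1.1 hle
            have hgR : 2*((∑ i ∈ Finset.Icc q.1 q.2, i : ℕ):ℝ) + ((q.1:ℝ)-1)^2 ≤ ((q.2:ℝ)+1)^2 := by
              have hc1' : ((q.1 - 1 : ℕ):ℝ) = (q.1:ℝ) - 1 := by
                have : (1:ℕ) ≤ q.1 := hq1.1
                push_cast [Nat.cast_sub this]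
                ring
              calc 2*((∑ i ∈ Finset.Icc q.1 q.2, i : ℕ):ℝ) + ((q.1:ℝ)-1)^2
                  = ((2*(∑ i ∈ Finset.Icc q.1 q.2, i) + (q.1-1)*(q.1-1) : ℕ) : ℝ) := by
                    push_cast [hc1']
                    ring
                _ ≤ (((q.2+1)*(q.2+1) : ℕ):ℝ) := by exact_mod_cast hg
                _ = ((q.2:ℝ)+1)^2 := by push_cast; ring
            have hmR : (m:ℝ) < ((∑ i ∈ Finset.Icc q.1 q.2, i : ℕ):ℝ) := by exact_mod_cast hsum
            have hq12 : ((q.1:ℝ)-1)^2 ≤ ((q.2:ℝ)+1)^2 - K := by nlinarith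
            have hsq : (q.1:ℝ)-1 ≤ Real.sqrt (((q.2:ℝ)+1)^2 - K) := by
              have h10 : (0:ℝ) ≤ (q.1:ℝ)-1 := by
                have : (1:ℕ) ≤ q.1 := hq1.1
                have : (1:ℝ) ≤ (q.1:ℝ) := by exact_mod_cast this
                linarith
              rw [Real.le_sqrt h10 (le_trans (sq_nonneg _) hq12)]
              exact hq12
            rw [hqv] at hsq
            rw [← hx] at hsq
            linarith
          · intro q1 h1 q2 h2 heq
            simp only at heq
            have hv1 : q1.2 = v := (Finset.mem_filter.mp h1).2
            have hv2 : q2.2 = v := (Finset.mem_filter.mp h2).2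
            exact Prod.ext heq (by rw [hv1, hv2])
        rw [Nat.card_Icc] at hcard
        calc ((Pn.filter (fun q => q.2 = v)).card : ℝ) ≤ (⌊x+1⌋₊ : ℝ) := by
              have : (Pn.filter (fun q => q.2 = v)).card ≤ ⌊x+1⌋₊ := by omega
              exact_mod_cast this
          _ ≤ x + 1 := Nat.floor_le (by linarith)
      calc (Pn.card : ℝ) = ∑ v ∈ Finset.Icc 1 n, ((Pn.filter (fun q => q.2 = v)).card : ℝ) := by
            rw [hfib]; push_cast; ring
        _ ≤ ∑ v ∈ Finset.Icc 1 n, (Real.sqrt (((v:ℝ)+1)^2 - K) + 1) := Finset.sum_le_sum hfiber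
        _ = (∑ v ∈ Finset.Icc 1 n, Real.sqrt (((v:ℝ)+1)^2 - K)) + (n:ℝ) := by
            rw [Finset.sum_add_distrib]
            simp [Nat.card_Icc]
        _ = (n:ℝ) + ∑ v ∈ Finset.Icc 1 n, Real.sqrt (((v:ℝ)+1)^2 - K) := by ring
    have hC := sum_sqrt_le hK0 n
    calc ((SP.image f).card : ℝ) ≤ (m:ℝ) + (Pn.card:ℝ) := by exact_mod_cast hA
      _ ≤ (m:ℝ) + ((n:ℝ) + ∑ v ∈ Finset.Icc 1 n, Real.sqrt (((v:ℝ)+1)^2 - K)) := by linarith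
      _ ≤ (m:ℝ) + ((n:ℝ) + Gfun K N) := by
          rw [hNdef]
          linarith [hC]
      _ ≤ ((E^2-1)/(2*(E^2+1)) + ε)*(n:ℝ)^2 := hfinal
end

section
/- Define $h : (0,1) \to \mathbb{R}$ by $h(\alpha) = \alpha + \sqrt{1-\alpha} - \alpha \log\left(\frac{1+\sqrt{1-\alpha}}{\sqrt{\alpha}}\right)$. Then $h$ attains its minimum on $(0,1)$ at $\alpha_0 = \left(\frac{2e}{e^2+1}\right)^2$, and the minimum value is $\frac{e^2-1}{e^2+1}$. -/
noncomputable def h (α : ℝ) : ℝ :=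
  α + Real.sqrt (1 - α) - α * Real.log ((1 + Real.sqrt (1 - α)) / Real.sqrt α)

/-! In the variable `t = √(1 - α)` the logarithm in `h` is `artanh t`, and `h (1 - t²)` becomes
`k t = t + (1 - t²)(1 - artanh t)`, with derivative `2t (artanh t - 1)`. On `[0, 1)` this changes
sign exactly at `t = tanh 1`, where `k = tanh 1 = (e² - 1)/(e² + 1)`; the minimiser is
`α₀ = 1 - tanh² 1 = (2e/(e² + 1))²`. -/

open Real Set

lemma hasDerivAt_artanh {x : ℝ} (hx : x ∈ Ioo (-1) 1) : HasDerivAt artanh (1 - x ^ 2)⁻¹ x := by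
  have hp : 1 + x ≠ 0 := by linarith [hx.1]
  have hm : 1 - x ≠ 0 := by linarith [hx.2]
  have hx2 : 1 - x ^ 2 ≠ 0 := by nlinarith [hx.1, hx.2]
  have hlog : HasDerivAt (fun y => 1 / 2 * log ((1 + y) / (1 - y))) (1 - x ^ 2)⁻¹ x := by
    have := ((((hasDerivAt_id x).const_add 1).div ((hasDerivAt_id x).const_sub 1) hm).log
      (div_ne_zero hp hm)).const_mul (1 / 2)
    refine this.congr_deriv ?_
    simp only [id, Pi.div_apply]
    field_simp
    ring
  refine hlog.congr_of_eventuallyEq ?_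
  filter_upwards [Ioo_mem_nhds hx.1 hx.2] with y hy using artanh_eq_half_log (Ioo_subset_Icc_self hy)

lemma tanh_one : tanh 1 = (exp 1 ^ 2 - 1) / (exp 1 ^ 2 + 1) := by
  rw [tanh_eq, exp_neg]
  field_simp

lemma tanh_one_mem_Ioo : tanh 1 ∈ Ioo 0 1 := by
  refine ⟨?_, tanh_lt_one 1⟩
  have := one_lt_exp_iff.mpr one_pos
  rw [tanh_one]
  exact div_pos (by nlinarith) (by positivity)

lemma one_sub_tanh_one_sq : 1 - tanh 1 ^ 2 = (2 * exp 1 / (exp 1 ^ 2 + 1)) ^ 2 := by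
  rw [tanh_one]
  field_simp
  ring

noncomputable def k (t : ℝ) : ℝ := t + (1 - t ^ 2) * (1 - artanh t)

lemma hasDerivAt_k {x : ℝ} (hx : x ∈ Ioo (-1) 1) : HasDerivAt k (2 * x * (artanh x - 1)) x := by
  have hx2 : 1 - x ^ 2 ≠ 0 := by nlinarith [hx.1, hx.2]
  have := (hasDerivAt_id x).add
    (((hasDerivAt_pow 2 x).const_sub 1).mul ((hasDerivAt_artanh hx).const_sub 1))
  refine this.congr_deriv ?_
  field_simp
  ring

lemma isMinOn_k : IsMinOn k (Ico 0 1) (tanh 1) := by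
  have hmem : Ioo 0 1 ⊆ Ioo (-1 : ℝ) 1 := Ioo_subset_Ioo_left (by norm_num)
  have hdiff : DifferentiableOn ℝ k (Ioo 0 1) := fun x hx =>
    (hasDerivAt_k (hmem hx)).differentiableAt.differentiableWithinAt
  have hcont {x : ℝ} (hx : x ∈ Ioo (-1) 1) : ContinuousAt k x := (hasDerivAt_k hx).continuousAt
  have htanh0 : 0 < tanh 1 := tanh_one_mem_Ioo.1
  have htanh : tanh 1 ∈ Ioo (-1 : ℝ) 1 := ⟨by linarith, tanh_lt_one 1⟩
  refine isMinOn_Ico_of_deriv (hcont (by norm_num)) (hcont htanh)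
    (hdiff.mono (Ioo_subset_Ioo_right htanh.2.le)) (hdiff.mono (Ioo_subset_Ioo_left htanh0.le))
    (fun x hx => ?_) (fun x hx => ?_)
  · have hx' : x ∈ Ioo (-1 : ℝ) 1 := ⟨by linarith [hx.1], hx.2.trans htanh.2⟩
    rw [(hasDerivAt_k hx').deriv]
    have : artanh x < 1 := by simpa [artanh_tanh] using strictMonoOn_artanh hx' htanh hx.2
    nlinarith [hx.1]
  · have hx' : x ∈ Ioo (-1 : ℝ) 1 := ⟨by linarith [hx.1, htanh.1], hx.2⟩
    rw [(hasDerivAt_k hx').deriv]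
    have : 1 < artanh x := by simpa [artanh_tanh] using strictMonoOn_artanh htanh hx' hx.1
    nlinarith [hx.1]

lemma k_tanh_one : k (tanh 1) = tanh 1 := by
  simp [k, artanh_tanh]

lemma log_one_add_div_sqrt_one_sub_sq {t : ℝ} (ht : t ∈ Ioo (-1) 1) :
    log ((1 + t) / √(1 - t ^ 2)) = artanh t := by
  have hp : 0 < 1 + t := by linarith [ht.1]
  have hm : 0 < 1 - t := by linarith [ht.2]
  have hsq : 0 < 1 - t ^ 2 := by nlinarith
  rw [artanh, show (1 + t) / (1 - t) = (1 + t) ^ 2 / (1 - t ^ 2) by field_simp; ring,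
    sqrt_div' _ hsq.le, sqrt_sq hp.le]

lemma h_one_sub_sq {t : ℝ} (ht : t ∈ Ico 0 1) : h (1 - t ^ 2) = k t := by
  rw [h, k, sub_sub_cancel, sqrt_sq ht.1,
    log_one_add_div_sqrt_one_sub_sq ⟨by linarith [ht.1], ht.2⟩]
  ring

lemma exists_one_sub_sq_eq {α : ℝ} (hα : α ∈ Ioo 0 1) : ∃ t ∈ Ico 0 1, 1 - t ^ 2 = α := by
  refine ⟨√(1 - α), ⟨sqrt_nonneg _, ?_⟩, by rw [sq_sqrt (by linarith [hα.2])]; ring⟩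
  rw [sqrt_lt' one_pos]
  linarith [hα.1]

lemma one_sub_sq_mem_Ioo {t : ℝ} (ht : t ∈ Ioo 0 1) : 1 - t ^ 2 ∈ Ioo 0 1 :=
  ⟨by nlinarith [ht.1, ht.2], by nlinarith [ht.1]⟩

theorem h_min :
    (∀ α ∈ Set.Ioo (0 : ℝ) 1, h ((2 * Real.exp 1 / (Real.exp 1 ^ 2 + 1)) ^ 2) ≤ h α) ∧
      h ((2 * Real.exp 1 / (Real.exp 1 ^ 2 + 1)) ^ 2)
        = (Real.exp 1 ^ 2 - 1) / (Real.exp 1 ^ 2 + 1) ∧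
      (2 * Real.exp 1 / (Real.exp 1 ^ 2 + 1)) ^ 2 ∈ Set.Ioo (0 : ℝ) 1 := by
  have h_tanh_one : h (1 - tanh 1 ^ 2) = tanh 1 := by
    rw [h_one_sub_sq (Ioo_subset_Ico_self tanh_one_mem_Ioo), k_tanh_one]
  rw [← one_sub_tanh_one_sq]
  refine ⟨fun α hα => ?_, h_tanh_one.trans tanh_one, one_sub_sq_mem_Ioo tanh_one_mem_Ioo⟩
  obtain ⟨t, ht, rfl⟩ := exists_one_sub_sq_eq hα
  rw [h_tanh_one, h_one_sub_sq ht, ← k_tanh_one]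
  exact isMinOn_k ht
end
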